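/- arXiv:quant-ph/9904093 — 3 statements merged into one kernel-verified Lean document; each statement's English description precedes it below -/
import Mathlib

section
/- Theorem 4, part 1 (maximum-likelihood decoding succeeds with probability at least 2^{−H(X|Y)}): Let α and β be finite nonempty types and let P : α × β → ℝ be a joint probability distribution (P(x,y) ≥ 0, Σ_{x,y} P(x,y) = 1) of a pair of random variables (X, Y). Then there exists a decoding function D₀ : β → α such that Pr[D₀(Y) = X] = Σ_y P(D₀(y), y) ≥ 2^{−H(X|Y)}, where H(X|Y) = −Σ_{x,y} P(x,y) log₂( P(x,y) / q(y) ) is the conditional Shannon entropy in bits, with q(y) = Σ_x P(x,y) and terms with P(x,y) = 0 contributing 0. -/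
/-! Writing `q` for the marginal of `Y`, the quantity `2^{−H(X|Y)}` is the weighted geometric mean
`∏_{x,y} (P(x,y)/q(y))^{P(x,y)}`, which by weighted AM–GM is at most the arithmetic mean
`Σ_y Σ_x P(x,y) · P(x,y)/q(y)`. For each `y` the inner sum is an average of the values `P(x,y)`,
hence at most `max_x P(x,y)`; choosing `D₀(y)` to attain that maximum gives the bound. -/

/-- The conditional Shannon entropy (in bits) `H(X|Y) = −Σ_{x,y} P(x,y) log₂(P(x,y)/q(y))`
of a joint distribution `P` on `α × β`, where `q(y) = Σ_x P(x,y)` is the marginal of `Y`. -/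
noncomputable def condEntropy {α β : Type*} [Fintype α] [Fintype β] (P : α → β → ℝ) : ℝ :=
  -∑ x, ∑ y, P x y * Real.logb 2 (P x y / ∑ x', P x' y)

lemma Real.rpow_mul_logb {b w z : ℝ} (hb : 0 < b) (hb₁ : b ≠ 1) (hw : 0 ≤ w) (hz : 0 ≤ z)
    (hwz : 0 < w → 0 < z) : b ^ (w * Real.logb b z) = z ^ w := by
  rcases hz.eq_or_lt with rfl | hz
  · obtain rfl : w = 0 := le_antisymm (not_lt.mp fun hpos => (hwz hpos).false) hw
    simp
  · rw [mul_comm, Real.rpow_mul hb.le, Real.rpow_logb hb hb₁ hz]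

lemma two_rpow_neg_condEntropy {α β : Type*} [Fintype α] [Fintype β] (P : α → β → ℝ)
    (hP : ∀ x y, 0 ≤ P x y) :
    (2 : ℝ) ^ (-condEntropy P) = ∏ x, ∏ y, (P x y / ∑ x', P x' y) ^ P x y := by
  have hq : ∀ x y, P x y ≤ ∑ x', P x' y := fun x y =>
    Finset.single_le_sum (fun x' _ => hP x' y) (Finset.mem_univ x)
  simp only [condEntropy, neg_neg, Real.rpow_sum_of_pos two_pos]
  refine Finset.prod_congr rfl fun x _ => Finset.prod_congr rfl fun y _ => ?_
  exact Real.rpow_mul_logb two_pos (by norm_num) (hP x y)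
    (div_nonneg (hP x y) ((hP x y).trans (hq x y))) fun h => div_pos h (h.trans_le (hq x y))

lemma sum_mul_div_sum_le {ι : Type*} [Fintype ι] {w : ι → ℝ} (hw : ∀ i, 0 ≤ w i) {a : ι}
    (ha : ∀ i, w i ≤ w a) : ∑ i, w i * (w i / ∑ j, w j) ≤ w a :=
  calc ∑ i, w i * (w i / ∑ j, w j) ≤ ∑ i, w a * (w i / ∑ j, w j) :=
        Finset.sum_le_sum fun i _ =>
          mul_le_mul_of_nonneg_right (ha i) (div_nonneg (hw i) (Finset.sum_nonneg fun j _ => hw j))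
    _ = w a * ((∑ i, w i) / ∑ j, w j) := by rw [← Finset.mul_sum, Finset.sum_div]
    _ ≤ w a := mul_le_of_le_one_right (hw a) (div_self_le_one _)

theorem decoding_prob_ge_two_pow_neg_condEntropy_general
    {α β : Type*} [Fintype α] [Fintype β] [Nonempty α]
    (P : α → β → ℝ) (hP : ∀ x y, 0 ≤ P x y) (hPs : ∑ x, ∑ y, P x y = 1) :
    ∃ D₀ : β → α, ∑ y, P (D₀ y) y ≥ (2 : ℝ) ^ (-condEntropy P) := by
  choose D₀ hD₀ using fun y => Finite.exists_max (P · y)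
  refine ⟨D₀, ?_⟩
  have amgm := Real.geom_mean_le_arith_mean_weighted Finset.univ (fun p : α × β => P p.1 p.2)
    (fun p => P p.1 p.2 / ∑ x', P x' p.2) (fun p _ => hP p.1 p.2)
    (by rw [Fintype.sum_prod_type]; exact hPs)
    (fun p _ => div_nonneg (hP p.1 p.2) (Finset.sum_nonneg fun x' _ => hP x' p.2))
  rw [Fintype.prod_prod_type, Fintype.sum_prod_type] at amgm
  calc (2 : ℝ) ^ (-condEntropy P) = ∏ x, ∏ y, (P x y / ∑ x', P x' y) ^ P x y :=
        two_rpow_neg_condEntropy P hP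
    _ ≤ ∑ x, ∑ y, P x y * (P x y / ∑ x', P x' y) := amgm
    _ = ∑ y, ∑ x, P x y * (P x y / ∑ x', P x' y) := Finset.sum_comm
    _ ≤ ∑ y, P (D₀ y) y := Finset.sum_le_sum fun y _ => sum_mul_div_sum_le (hP · y) (hD₀ y)

/-- Theorem 4, part 1: maximum-likelihood decoding succeeds with probability at least
`2^{−H(X|Y)}`: for any joint distribution `P` of `(X, Y)` there is a decoding function
`D₀ : β → α` with `Pr[D₀(Y) = X] = Σ_y P(D₀(y), y) ≥ 2^{−H(X|Y)}`. -/
theorem decoding_prob_ge_two_pow_neg_condEntropy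
    {α β : Type*} [Fintype α] [Fintype β] [Nonempty α] [Nonempty β]
    (P : α → β → ℝ) (hP : ∀ x y, 0 ≤ P x y) (hPs : ∑ x, ∑ y, P x y = 1) :
    ∃ D₀ : β → α, ∑ y, P (D₀ y) y ≥ (2 : ℝ) ^ (-condEntropy P) :=
  decoding_prob_ge_two_pow_neg_condEntropy_general P hP hPs
end

section
/- Claim in Section 5 (projection mass of vectors from a low-dimensional subspace): Let V be a finite-dimensional complex inner product space, let E be a subspace of V, let α be a finite type, let (P_x)_{x∈α} be a family of orthogonal projections on V whose ranges are mutually orthogonal (P_x P_{x'} = 0 for x ≠ x'), and let (φ_x)_{x∈α} be unit vectors with φ_x ∈ E for every x. Then Σ_x ‖P_x φ_x‖² ≤ dim E. In particular, if dim E ≤ 2^m then Σ_x ‖P_x φ_x‖² ≤ 2^m. -/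
/-!
Expanding `φ x` in an orthonormal basis `(e i)` of `E` and applying Cauchy–Schwarz gives
`‖P x (φ x)‖² ≤ ∑ i, ‖P x (e i)‖²`. Since `∑ x, P x` is again an orthogonal projection, Bessel's
inequality `∑ x, ‖P x (e i)‖² ≤ ‖e i‖² = 1` holds for every `i`, and there are `dim E` basis vectors.
-/

open scoped InnerProductSpace

namespace LinearMap.IsSymmetricProjection

variable {𝕜 E : Type*} [RCLike 𝕜] [NormedAddCommGroup E] [InnerProductSpace 𝕜 E]
  {p : E →ₗ[𝕜] E}

theorem re_inner_apply_self (hp : p.IsSymmetricProjection) (v : E) :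
    RCLike.re ⟪p v, v⟫_𝕜 = ‖p v‖ ^ 2 := by
  conv_lhs => rw [← hp.isIdempotentElem]
  rw [Module.End.mul_apply, hp.isSymmetric]
  exact inner_self_eq_norm_sq _

theorem norm_apply_le (hp : p.IsSymmetricProjection) (v : E) : ‖p v‖ ≤ ‖v‖ := by
  have h : ‖p v‖ ^ 2 ≤ ‖p v‖ * ‖v‖ :=
    hp.re_inner_apply_self v ▸ (RCLike.re_le_norm _).trans (norm_inner_le_norm _ _)
  nlinarith [norm_nonneg (p v), norm_nonneg v]

end LinearMap.IsSymmetricProjection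

theorem OrthogonalIdempotents.sum_norm_sq_apply_le {𝕜 E ι : Type*} [RCLike 𝕜]
    [NormedAddCommGroup E] [InnerProductSpace 𝕜 E] {p : ι → E →ₗ[𝕜] E}
    (hp : OrthogonalIdempotents p) (hsym : ∀ i, (p i).IsSymmetric) (s : Finset ι) (v : E) :
    ∑ i ∈ s, ‖p i v‖ ^ 2 ≤ ‖v‖ ^ 2 := by
  have hproj (i : ι) : (p i).IsSymmetricProjection := ⟨hp.idem i, hsym i⟩
  have hsum : (∑ i ∈ s, p i).IsSymmetricProjection :=
    ⟨hp.isIdempotentElem_sum, LinearMap.isSymmetric_sum s fun i _ => hsym i⟩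
  calc ∑ i ∈ s, ‖p i v‖ ^ 2 = RCLike.re ⟪(∑ i ∈ s, p i) v, v⟫_𝕜 := by
        simp only [LinearMap.sum_apply, sum_inner, map_sum, fun i => (hproj i).re_inner_apply_self v]
    _ = ‖(∑ i ∈ s, p i) v‖ ^ 2 := hsum.re_inner_apply_self v
    _ ≤ ‖v‖ ^ 2 := by gcongr; exact hsum.norm_apply_le v

theorem OrthonormalBasis.norm_map_sq_le {𝕜 E F ι : Type*} [RCLike 𝕜] [Fintype ι]
    [NormedAddCommGroup E] [InnerProductSpace 𝕜 E] [SeminormedAddCommGroup F] [NormedSpace 𝕜 F]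
    (b : OrthonormalBasis ι 𝕜 E) (T : E →ₗ[𝕜] F) (v : E) :
    ‖T v‖ ^ 2 ≤ ‖v‖ ^ 2 * ∑ i, ‖T (b i)‖ ^ 2 := by
  have hexp : T v = ∑ i, ⟪b i, v⟫_𝕜 • T (b i) := by
    conv_lhs => rw [← b.sum_repr' v]
    simp only [map_sum, map_smul]
  calc ‖T v‖ ^ 2 ≤ (∑ i, ‖⟪b i, v⟫_𝕜‖ * ‖T (b i)‖) ^ 2 := by
        gcongr
        rw [hexp]
        exact (norm_sum_le _ _).trans_eq (by simp only [norm_smul])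
    _ ≤ (∑ i, ‖⟪b i, v⟫_𝕜‖ ^ 2) * ∑ i, ‖T (b i)‖ ^ 2 := Finset.sum_mul_sq_le_sq_mul_sq _ _ _
    _ = ‖v‖ ^ 2 * ∑ i, ‖T (b i)‖ ^ 2 := by rw [b.sum_sq_norm_inner_right]

/-- The Claim in Section 5: if `(P_x)` are orthogonal projections with mutually
orthogonal ranges on a finite-dimensional complex inner product space `V`, and
`(φ_x)` are unit vectors all lying in a subspace `E`, then
`Σ_x ‖P_x φ_x‖² ≤ dim E`. -/
theorem sum_proj_norm_sq_le_dim {V : Type*} [NormedAddCommGroup V]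
    [InnerProductSpace ℂ V] [FiniteDimensional ℂ V]
    (E : Submodule ℂ V) {α : Type*} [Fintype α]
    (P : α → V →ₗ[ℂ] V)
    (hproj : ∀ x, P x ∘ₗ P x = P x)
    (hsa : ∀ x, LinearMap.IsSymmetric (P x))
    (horth : ∀ x x', x ≠ x' → P x ∘ₗ P x' = 0)
    (φ : α → V) (hφn : ∀ x, ‖φ x‖ = 1) (hφE : ∀ x, φ x ∈ E) :
    ∑ x, ‖P x (φ x)‖ ^ 2 ≤ (Module.finrank ℂ E : ℝ) := by
  let e := stdOrthonormalBasis ℂ E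
  have hP : OrthogonalIdempotents P := ⟨hproj, fun x x' hne => horth x x' hne⟩
  have hφ (x : α) : ‖P x (φ x)‖ ^ 2 ≤ ∑ i, ‖P x (e i)‖ ^ 2 := by
    simpa [hφn x] using e.norm_map_sq_le (P x ∘ₗ E.subtype) ⟨φ x, hφE x⟩
  calc ∑ x, ‖P x (φ x)‖ ^ 2 ≤ ∑ x, ∑ i, ‖P x (e i)‖ ^ 2 := Finset.sum_le_sum fun x _ => hφ x
    _ = ∑ i, ∑ x, ‖P x (e i)‖ ^ 2 := Finset.sum_comm
    _ ≤ ∑ i, ‖(e i : V)‖ ^ 2 :=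
        Finset.sum_le_sum fun i _ => hP.sum_norm_sq_apply_le hsa _ _
    _ = Module.finrank ℂ E := by simp [Submodule.norm_coe, e.norm_eq_one]
end

section
/- Communication corollary of Theorem 4, part 2 (m ≥ n − log(1/δ) for transmitting n uniform bits over m qubits): Let n, m be natural numbers and 0 < δ ≤ 1. Let V be a finite-dimensional complex inner product space, let E be a subspace of V with dim E ≤ 2^m, let (φ_x), indexed by x ∈ {0,1}^n, be unit vectors with φ_x ∈ E, and let (P_x), indexed by x ∈ {0,1}^n, be orthogonal projections on V with mutually orthogonal ranges (P_x P_{x'} = 0 for x ≠ x'). If the average decoding probability satisfies 2^{−n} Σ_{x∈{0,1}^n} ‖P_x φ_x‖² ≥ δ, then (m : ℝ) ≥ n − log₂(1/δ). -/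
/-!
The total success weight `∑ₓ ‖Pₓ φₓ‖²` is at most `dim E`: for an orthonormal basis `(b k)`
of `E`, each term is bounded by the squared Hilbert–Schmidt norm `∑ₖ ‖Pₓ b k‖²` of `Pₓ`
restricted to `E` (operator norm ≤ Hilbert–Schmidt norm), and after swapping the sums, Bessel's
inequality for the mutually orthogonal projections gives `∑ₓ ‖Pₓ b k‖² ≤ 1` for each `k`.
Hence `δ 2ⁿ ≤ dim E ≤ 2ᵐ`; take `log₂`.
-/

open scoped InnerProductSpace

section OrthogonalProjections

variable {𝕜 V : Type*} [RCLike 𝕜] [NormedAddCommGroup V] [InnerProductSpace 𝕜 V]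

theorem LinearMap.IsSymmetric.re_inner_apply_self_of_idem {P : V →ₗ[𝕜] V} (hsa : P.IsSymmetric)
    (hproj : P ∘ₗ P = P) (v : V) : RCLike.re ⟪v, P v⟫_𝕜 = ‖P v‖ ^ 2 := by
  have hidem : P (P v) = P v := LinearMap.congr_fun hproj v
  rw [← hidem, ← hsa, hidem, inner_self_eq_norm_sq]

theorem sum_norm_sq_apply_le_norm_sq {ι : Type*} [Fintype ι] (P : ι → V →ₗ[𝕜] V)
    (hproj : ∀ i, P i ∘ₗ P i = P i) (hsa : ∀ i, (P i).IsSymmetric)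
    (horth : ∀ i j, i ≠ j → P i ∘ₗ P j = 0) (v : V) :
    ∑ i, ‖P i v‖ ^ 2 ≤ ‖v‖ ^ 2 := by
  classical
  set w := ∑ i, P i v with hw
  have hPw : ∀ i, P i w = P i v := fun i => by
    have hPP : ∀ j, P i (P j v) = if j = i then P i v else 0 := fun j => by
      split_ifs with hji
      · exact hji ▸ LinearMap.congr_fun (hproj i) v
      · exact LinearMap.congr_fun (horth i j (Ne.symm hji)) v
    simp only [hw, map_sum, hPP, Finset.sum_ite_eq', Finset.mem_univ, if_true]
  have hvw : RCLike.re ⟪v, w⟫_𝕜 = ∑ i, ‖P i v‖ ^ 2 := by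
    simp only [hw, inner_sum, map_sum, (hsa _).re_inner_apply_self_of_idem (hproj _)]
  have hww : ‖w‖ ^ 2 = ∑ i, ‖P i v‖ ^ 2 := by
    calc ‖w‖ ^ 2 = RCLike.re ⟪w, w⟫_𝕜 := (inner_self_eq_norm_sq w).symm
      _ = RCLike.re (∑ i, ⟪v, P i w⟫_𝕜) := by nth_rw 1 [hw]; simp only [sum_inner, hsa _ v]
      _ = RCLike.re ⟪v, w⟫_𝕜 := by simp only [hPw, ← inner_sum, ← hw]
      _ = ∑ i, ‖P i v‖ ^ 2 := hvw
  -- `0 ≤ ‖v - w‖ ^ 2 = ‖v‖ ^ 2 - ∑ i, ‖P i v‖ ^ 2`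
  nlinarith [norm_sub_sq (𝕜 := 𝕜) v w, sq_nonneg ‖v - w‖]

end OrthogonalProjections

theorem OrthonormalBasis.norm_sq_apply_le {𝕜 E F ι : Type*} [RCLike 𝕜] [NormedAddCommGroup E]
    [InnerProductSpace 𝕜 E] [NormedAddCommGroup F] [NormedSpace 𝕜 F] [Fintype ι]
    (b : OrthonormalBasis ι 𝕜 E) (T : E →ₗ[𝕜] F) (u : E) :
    ‖T u‖ ^ 2 ≤ ‖u‖ ^ 2 * ∑ i, ‖T (b i)‖ ^ 2 := by
  have hnorm : ‖T u‖ ≤ ∑ i, ‖⟪b i, u⟫_𝕜‖ * ‖T (b i)‖ := by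
    conv_lhs => rw [← b.sum_repr' u, map_sum]
    refine (norm_sum_le _ _).trans_eq (Finset.sum_congr rfl fun i _ => ?_)
    rw [map_smul, norm_smul]
  calc ‖T u‖ ^ 2 ≤ (∑ i, ‖⟪b i, u⟫_𝕜‖ * ‖T (b i)‖) ^ 2 := by gcongr
    _ ≤ (∑ i, ‖⟪b i, u⟫_𝕜‖ ^ 2) * ∑ i, ‖T (b i)‖ ^ 2 := Finset.sum_mul_sq_le_sq_mul_sq _ _ _
    _ = ‖u‖ ^ 2 * ∑ i, ‖T (b i)‖ ^ 2 := by rw [b.sum_sq_norm_inner_right]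

theorem sum_norm_sq_apply_le_finrank {𝕜 V ι : Type*} [RCLike 𝕜] [NormedAddCommGroup V]
    [InnerProductSpace 𝕜 V] [Fintype ι] (E : Submodule 𝕜 V) [FiniteDimensional 𝕜 E]
    (P : ι → V →ₗ[𝕜] V) (hproj : ∀ i, P i ∘ₗ P i = P i) (hsa : ∀ i, (P i).IsSymmetric)
    (horth : ∀ i j, i ≠ j → P i ∘ₗ P j = 0)
    (φ : ι → V) (hφn : ∀ i, ‖φ i‖ ≤ 1) (hφE : ∀ i, φ i ∈ E) :
    ∑ i, ‖P i (φ i)‖ ^ 2 ≤ Module.finrank 𝕜 E := by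
  let b := stdOrthonormalBasis 𝕜 E
  have hφ : ∀ i, ‖P i (φ i)‖ ^ 2 ≤ ∑ k, ‖P i (b k)‖ ^ 2 := fun i =>
    (b.norm_sq_apply_le (P i ∘ₗ E.subtype) ⟨φ i, hφE i⟩).trans <|
      mul_le_of_le_one_left (Finset.sum_nonneg fun _ _ => sq_nonneg _)
        (pow_le_one₀ (norm_nonneg _) (hφn i))
  calc ∑ i, ‖P i (φ i)‖ ^ 2 ≤ ∑ i, ∑ k, ‖P i (b k)‖ ^ 2 := Finset.sum_le_sum fun i _ => hφ i
    _ = ∑ k, ∑ i, ‖P i (b k)‖ ^ 2 := Finset.sum_comm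
    _ ≤ ∑ k, ‖(b k : V)‖ ^ 2 :=
        Finset.sum_le_sum fun k _ => sum_norm_sq_apply_le_norm_sq P hproj hsa horth _
    _ = Module.finrank 𝕜 E := by
        simp only [Submodule.norm_coe, b.orthonormal.1 _, one_pow, Finset.sum_const,
          Finset.card_univ, Fintype.card_fin, nsmul_eq_mul, mul_one]

theorem sub_logb_inv_le_of_mul_two_pow_le {n m : ℕ} {δ : ℝ} (hδ : 0 < δ)
    (h : δ * 2 ^ n ≤ 2 ^ m) : (n : ℝ) - Real.logb 2 (1 / δ) ≤ m := by
  have hlog := Real.logb_le_logb_of_le (b := 2) (by norm_num) (by positivity) h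
  rw [Real.logb_mul hδ.ne' (by positivity), Real.logb_pow, Real.logb_pow,
    Real.logb_self_eq_one one_lt_two] at hlog
  rw [one_div, Real.logb_inv]
  linarith

theorem qubits_ge_bits_sub_log_general {n m : ℕ} {δ : ℝ} (hδ : 0 < δ)
    {V : Type*} [NormedAddCommGroup V] [InnerProductSpace ℂ V] [FiniteDimensional ℂ V]
    (E : Submodule ℂ V) (hdim : Module.finrank ℂ E ≤ 2 ^ m)
    (φ : (Fin n → Bool) → V) (hφn : ∀ x, ‖φ x‖ = 1) (hφE : ∀ x, φ x ∈ E)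
    (P : (Fin n → Bool) → V →ₗ[ℂ] V)
    (hproj : ∀ x, P x ∘ₗ P x = P x)
    (hsa : ∀ x, LinearMap.IsSymmetric (P x))
    (horth : ∀ x x', x ≠ x' → P x ∘ₗ P x' = 0)
    (havg : ((2 : ℝ) ^ n)⁻¹ * ∑ x, ‖P x (φ x)‖ ^ 2 ≥ δ) :
    (m : ℝ) ≥ (n : ℝ) - Real.logb 2 (1 / δ) := by
  refine sub_logb_inv_le_of_mul_two_pow_le hδ ?_
  rw [ge_iff_le, le_inv_mul_iff₀ (by positivity)] at havg
  calc δ * 2 ^ n ≤ ∑ x, ‖P x (φ x)‖ ^ 2 := by linarith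
    _ ≤ Module.finrank ℂ E :=
        sum_norm_sq_apply_le_finrank E P hproj hsa horth φ (fun x => (hφn x).le) hφE
    _ ≤ 2 ^ m := by exact_mod_cast hdim

/-- Communication corollary of Theorem 4, part 2: if `n` uniformly random bits are
transmitted as pure states over `m` qubits (codewords `φ_x` lying in a subspace `E`
of dimension at most `2^m`) and decoded by an orthogonal measurement `(P_x)` with
average success probability at least `δ`, then `m ≥ n − log₂(1/δ)`. -/
theorem qubits_ge_bits_sub_log {n m : ℕ} {δ : ℝ} (hδ : 0 < δ) (hδ1 : δ ≤ 1)
    {V : Type*} [NormedAddCommGroup V] [InnerProductSpace ℂ V] [FiniteDimensional ℂ V]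
    (E : Submodule ℂ V) (hdim : Module.finrank ℂ E ≤ 2 ^ m)
    (φ : (Fin n → Bool) → V) (hφn : ∀ x, ‖φ x‖ = 1) (hφE : ∀ x, φ x ∈ E)
    (P : (Fin n → Bool) → V →ₗ[ℂ] V)
    (hproj : ∀ x, P x ∘ₗ P x = P x)
    (hsa : ∀ x, LinearMap.IsSymmetric (P x))
    (horth : ∀ x x', x ≠ x' → P x ∘ₗ P x' = 0)
    (havg : ((2 : ℝ) ^ n)⁻¹ * ∑ x, ‖P x (φ x)‖ ^ 2 ≥ δ) :
    (m : ℝ) ≥ (n : ℝ) - Real.logb 2 (1 / δ) :=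
  qubits_ge_bits_sub_log_general hδ E hdim φ hφn hφE P hproj hsa horth havg
end
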